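/- For fixed x > 0 the family f_a(x), defined by f_a(x) = (1/a)·log(1+ax) for a > 0 and f_a(x) = (1−a)x for a ≤ 0, is continuous in a at a = 0 and strictly decreasing in a on all of ℝ. -/

import Mathlib

/-!
For `a > 0`, `a⁻¹ log (1 + a x) = x · log (1 + t) / t` with `t = a x`, and `log (1 + t) / t` is the
slope of the secant of the strictly concave function `log` between `1` and `1 + t`, hence strictly
decreasing in `t`. The secant slopes stay below the tangent slope `1` at `1`, so the values for
`a > 0` lie below `x`, the common value at `a = 0`; as `a → 0⁺` they tend to `x`
(`t log (1 + x / t) → x` as `t → ∞`), matching the linear branch `(1 - a) x`.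
-/

open Real Set Filter Topology

theorem strictAntiOn_log_one_add_div : StrictAntiOn (fun t : ℝ => log (1 + t) / t) (Ioi 0) := by
  intro s (hs : 0 < s) t (ht : 0 < t) hst
  have := strictConcaveOn_log_Ioi.secant_strict_mono (a := 1) (mem_Ioi.2 one_pos)
    (mem_Ioi.2 (by linarith : 0 < 1 + s)) (mem_Ioi.2 (by linarith : 0 < 1 + t))
    (by linarith) (by linarith) (by linarith)
  simpa using this

theorem log_one_add_lt_self {t : ℝ} (ht : 0 < t) : log (1 + t) < t := by
  have := log_lt_sub_one_of_pos (show 0 < 1 + t by linarith) (by linarith)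
  linarith

theorem StrictAntiOn.Ici_of_Ioi {α β : Type*} [PartialOrder α] [Preorder β] {f : α → β} {a : α}
    (h : StrictAntiOn f (Ioi a)) (ha : ∀ b, a < b → f b < f a) : StrictAntiOn f (Ici a) := by
  intro b (hb : a ≤ b) c (hc : a ≤ c) hbc
  rcases hb.eq_or_lt with rfl | hb
  · exact ha c hbc
  · exact h hb (hb.trans hbc) hbc

noncomputable def logFamily (a x : ℝ) : ℝ :=
  if 0 < a then a⁻¹ * log (1 + a * x) else (1 - a) * x

namespace logFamily

variable {a x : ℝ}

theorem of_pos (ha : 0 < a) : logFamily a x = a⁻¹ * log (1 + a * x) := if_pos ha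

theorem of_nonpos (ha : a ≤ 0) : logFamily a x = (1 - a) * x := if_neg ha.not_gt

@[simp] theorem zero : logFamily 0 x = x := by simp [of_nonpos]

theorem eq_mul_log_one_add_div (ha : 0 < a) (hx : 0 < x) :
    logFamily a x = x * (log (1 + a * x) / (a * x)) := by
  rw [of_pos ha]
  field_simp

theorem lt_self_of_pos (ha : 0 < a) (hx : 0 < x) : logFamily a x < x := by
  rw [of_pos ha, inv_mul_lt_iff₀ ha]
  exact log_one_add_lt_self (mul_pos ha hx)

theorem strictAntiOn_Iic (hx : 0 < x) : StrictAntiOn (logFamily · x) (Iic 0) := by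
  intro b (hb : b ≤ 0) c (hc : c ≤ 0) hbc
  simp only [of_nonpos hb, of_nonpos hc]
  nlinarith

theorem strictAntiOn_Ioi (hx : 0 < x) : StrictAntiOn (logFamily · x) (Ioi 0) := by
  intro b (hb : 0 < b) c (hc : 0 < c) hbc
  simp only [eq_mul_log_one_add_div hb hx, eq_mul_log_one_add_div hc hx]
  exact mul_lt_mul_of_pos_left (strictAntiOn_log_one_add_div (mul_pos hb hx) (mul_pos hc hx)
    (mul_lt_mul_of_pos_right hbc hx)) hx

theorem strictAnti (hx : 0 < x) : StrictAnti (logFamily · x) :=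
  (strictAntiOn_Iic hx).Iic_union_Ici <|
    (strictAntiOn_Ioi hx).Ici_of_Ioi fun _ hb => by simpa using lt_self_of_pos hb hx

theorem continuousWithinAt_Iic_zero : ContinuousWithinAt (logFamily · x) (Iic 0) 0 :=
  (continuous_const.sub continuous_id |>.mul continuous_const).continuousWithinAt.congr
    (fun _ hb => of_nonpos hb) (of_nonpos le_rfl)

theorem tendsto_nhdsGT_zero : Tendsto (logFamily · x) (𝓝[>] 0) (𝓝 x) := by
  refine ((tendsto_mul_log_one_add_div_atTop x).comp tendsto_inv_nhdsGT_zero).congr' ?_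
  filter_upwards [self_mem_nhdsWithin] with a (ha : 0 < a)
  simp [of_pos ha, div_inv_eq_mul, mul_comm]

theorem continuousAt_zero : ContinuousAt (logFamily · x) 0 :=
  continuousAt_iff_continuous_left_right.2
    ⟨continuousWithinAt_Iic_zero,
      continuousWithinAt_Ioi_iff_Ici.1 (by simpa [ContinuousWithinAt] using tendsto_nhdsGT_zero)⟩

end logFamily

/-- For fixed `x > 0`, the family `a ↦ f_a(x)`, where
`f_a(x) = a⁻¹ log(1+ax)` for `a > 0` and `f_a(x) = (1-a)x` for `a ≤ 0`,
is continuous at `a = 0` and strictly decreasing in `a` on all of `ℝ`. -/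
theorem stmt8
    (f : ℝ → ℝ → ℝ)
    (hf : ∀ a x, f a x = if 0 < a then a⁻¹ * Real.log (1 + a * x) else (1 - a) * x)
    (x : ℝ) (hx : 0 < x) :
    ContinuousAt (fun a => f a x) 0 ∧ StrictAnti (fun a => f a x) := by
  have hf_eq : (fun a => f a x) = (logFamily · x) := funext fun a => hf a x
  rw [hf_eq]
  exact ⟨logFamily.continuousAt_zero, logFamily.strictAnti hx⟩
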